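/- arXiv:1804.09098 — 6 statements merged into one kernel-verified Lean document; each statement's English description precedes it below -/
import Mathlib

section
/- In the Kripke-Joyal forcing semantics over the category of worlds (non-empty finite sets of clocks with time assignments), the clock irrelevance principle holds: for any proposition φ not depending on a clock, φ holds at a world if and only if the universally clock-quantified proposition (∀κ. φ) holds at that world. -/
/-- A world of the base category `CLK`: a non-empty finite set of clock names
(represented as `Fin n` with `0 < n`) together with a time assignment. -/
structure World where
  n : ℕ
  pos : 0 < n
  time : Fin n → ℕ

/-- A morphism of worlds `ρ : V ⟶ U`; its action `map` on clock names is the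
contravariant action `ρ* : 𝒩(U) → 𝒩(V)`, subject to `∂_V(ρ*κ) ≤ ∂_U(κ)`. -/
structure WHom (V U : World) where
  map : Fin U.n → Fin V.n
  le : ∀ κ, V.time (map κ) ≤ U.time κ

/-- The world `𝐔[κ ↦ m]`, replacing the time assigned to `κ` by `m`. -/
def World.set (U : World) (κ : Fin U.n) (m : ℕ) : World :=
  ⟨U.n, U.pos, Function.update U.time κ m⟩

/-- Presheaf propositions on worlds. -/
def Pred := World → Prop

/-- A predicate is monotone (a presheaf proposition) when it restricts along
world morphisms. -/
def Pred.Mono (φ : Pred) : Prop := ∀ {V U : World}, WHom V U → φ U → φ V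

/-- Forcing clause for the later modality `𝐔 ⊩ ▷κ φ`: trivially true when
`∂_U(κ) = 0`, and `𝐔[κ ↦ m] ⊩ φ` when `∂_U(κ) = m + 1`. -/
def Later (φ : Pred) (U : World) (κ : Fin U.n) : Prop :=
  ∀ m, U.time κ = m + 1 → φ (U.set κ m)


/-- clock irrelevance: for a clock-independent presheaf proposition
`φ`, `𝐔 ⊩ φ` iff `𝐔 ⊩ ∀κ. φ`, the latter forced by quantifying over all
morphisms `ρ : 𝐕 → 𝐔` and all clocks at `𝐕`. -/
theorem clock_irrelevance (φ : Pred) (hφ : Pred.Mono φ) (U : World) :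
    φ U ↔ ∀ (V : World), WHom V U → ∀ _κ : Fin V.n, φ V := by
  constructor
  · intro h V ρ _κ
    exact hφ ρ h
  · intro h
    exact h U ⟨id, fun κ => le_refl _⟩ ⟨0, U.pos⟩
end

section
/- Löb induction is valid: for every world 𝐔, clock κ at 𝐔, and monotone predicate φ, if 𝐔 ⊩ (▷κ φ ⇒ φ), then 𝐔 ⊩ φ. The proof proceeds by induction on the time ∂_U(κ) assigned to κ. -/
namespace WHom

def id (U : World) : WHom U U := ⟨fun κ => κ, fun _ => le_rfl⟩

def comp {W V U : World} (σ : WHom W V) (ρ : WHom V U) : WHom W U :=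
  ⟨σ.map ∘ ρ.map, fun κ => (σ.le _).trans (ρ.le κ)⟩

end WHom

namespace World

theorem set_time_self (U : World) (κ : Fin U.n) (m : ℕ) : (U.set κ m).time κ = m :=
  Function.update_self _ _ _

def setHom (U : World) (κ : Fin U.n) {m : ℕ} (hm : m ≤ U.time κ) : WHom (U.set κ m) U where
  map i := i
  le i := by
    change Function.update U.time κ m i ≤ U.time i
    rw [Function.update_apply]
    split_ifs with hi
    · exact hi ▸ hm
    · exact le_rfl

end World

theorem loeb_induction_general (φ : Pred) (U : World) (κ : Fin U.n)
    (h : ∀ (V : World) (ρ : WHom V U), Later φ V (ρ.map κ) → φ V) :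
    φ U := by
  obtain ⟨n, hn⟩ : ∃ n, U.time κ = n := ⟨_, rfl⟩
  induction n generalizing U with
  | zero => exact h U (WHom.id U) fun m (hm : U.time κ = m + 1) => by omega
  | succ n ih =>
    refine h U (WHom.id U) fun m (hm : U.time κ = m + 1) => ?_
    obtain rfl : m = n := by omega
    exact ih (U.set κ m) κ (fun V ρ => h V (ρ.comp (U.setHom κ (by omega))))
      (U.set_time_self κ m)

/-- Löb induction: if `𝐔 ⊩ (▷κ φ ⇒ φ)` then `𝐔 ⊩ φ`. -/
theorem loeb_induction (φ : Pred) (hφ : Pred.Mono φ) (U : World) (κ : Fin U.n)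
    (h : ∀ (V : World) (ρ : WHom V U), Later φ V (ρ.map κ) → φ V) :
    φ U :=
  loeb_induction_general φ U κ h
end

section
/- One can delete a later modality under a clock quantifier: if for every world-extension with a fresh clock κ at every time value the predicate ▷κ φ(κ) is forced, then for every such extension φ(κ) itself is forced. Concretely, if for all n ∈ ℕ the extended world (U+1, [∂_U, n]) forces ▷κ φ(κ) at the fresh clock κ, then for all m ∈ ℕ the extended world (U+1, [∂_U, m]) forces φ(κ); this follows by instantiating the hypothesis at time m+1. -/
/-- The world `(U+1, [∂_U, m])`: `W` extended with one fresh clock of time `m`. -/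
def World.extend (W : World) (m : ℕ) : World :=
  ⟨W.n + 1, Nat.succ_pos _, Fin.snoc W.time m⟩

/-- Later modality for clock-indexed predicates. -/
def LaterC (φ : ∀ V : World, Fin V.n → Prop) (U : World) (κ : Fin U.n) : Prop :=
  ∀ m, U.time κ = m + 1 → φ (U.set κ m) κ

/-- deleting a later modality under the clock quantifier: if every
fresh-clock extension `(U+1, [∂_U, n])` forces `▷κ φ(κ)` at the fresh clock `κ`,
then every such extension forces `φ(κ)` itself. -/
theorem forall_clock_delete_later (W : World) (φ : ∀ V : World, Fin V.n → Prop)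
    (hφ : ∀ {V U : World} (ρ : WHom V U) (κ : Fin U.n), φ U κ → φ V (ρ.map κ))
    (h : ∀ n : ℕ, LaterC φ (W.extend n) (Fin.last W.n)) :
    ∀ m : ℕ, φ (W.extend m) (Fin.last W.n) := by
  intro m
  have key : Function.update (Fin.snoc W.time (m+1) : Fin (W.n+1) → ℕ) (Fin.last W.n) m
      = Fin.snoc W.time m := by
    funext i
    refine Fin.lastCases ?_ ?_ i
    · simp
    · intro j
      simp [Function.update_of_ne (Fin.castSucc_lt_last j).ne]
  have := h (m + 1) m (by simp [World.extend])
  simp only [World.extend, World.set] at this ⊢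
  rwa [key] at this
end

section
/- If Y is a total and inhabited presheaf over the category of clock worlds, then for any clock κ and monotone predicate φ on Y: if a world forces ▷κ(∃ y : Y, φ(y)), then it forces ∃ y : Y, ▷κ φ(y). -/
/-- A presheaf of sets over the category of clock worlds. -/
structure Psh where
  obj : World → Type
  map : ∀ {V U : World}, WHom V U → obj U → obj V

/-- The increment morphism `[κ+=1] : 𝐔[κ↦m] → 𝐔`, when `∂_U(κ) = m + 1`. -/
def incHom (U : World) (κ : Fin U.n) (m : ℕ) (h : U.time κ = m + 1) :
    WHom (U.set κ m) U where
  map := fun κ' => κ'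
  le := by
    intro κ'
    by_cases hk : κ' = κ
    · subst hk; simp [World.set, h]
    · simp [World.set, Function.update_of_ne hk]

/-!
`▷κ` quantifies over the predecessors `m` of `∂_U(κ)`, of which there is at most one. If there is
none, any element of `Y(𝐔)` (inhabitedness) is a witness; otherwise a witness at `𝐔[κ ↦ m]` is
lifted along the increment `[κ+=1]` by totality.
-/

theorem Function.exists_forall_apply_of_surjective {ι : Sort*} [Subsingleton ι] {α : Type*}
    [Nonempty α] {β : ι → Type*} (f : ∀ i, α → β i) (hf : ∀ i, (f i).Surjective)
    {p : ∀ i, β i → Prop} (h : ∀ i, ∃ b, p i b) : ∃ a, ∀ i, p i (f i a) := by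
  rcases isEmpty_or_nonempty ι with _ | ⟨⟨i⟩⟩
  · exact ⟨Classical.arbitrary α, isEmptyElim⟩
  · obtain ⟨b, hb⟩ := h i
    obtain ⟨a, rfl⟩ := hf i b
    exact ⟨a, fun j => Subsingleton.elim i j ▸ hb⟩

instance Nat.subsingleton_pred_eq (t : ℕ) : Subsingleton {m : ℕ // t = m + 1} :=
  ⟨fun a b => Subtype.ext (by have := a.2; have := b.2; omega)⟩

theorem total_yank_existential_general (Y : Psh)
    (htotal : ∀ (U : World) (κ : Fin U.n) (m : ℕ) (h : U.time κ = m + 1),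
      Function.Surjective (Y.map (incHom U κ m h)))
    (hinh : ∀ U : World, Nonempty (Y.obj U))
    (φ : ∀ W : World, Y.obj W → Prop)
    (U : World) (κ : Fin U.n)
    (h : ∀ m (_ : U.time κ = m + 1), ∃ y : Y.obj (U.set κ m), φ (U.set κ m) y) :
    ∃ y : Y.obj U, ∀ m (hm : U.time κ = m + 1),
      φ (U.set κ m) (Y.map (incHom U κ m hm) y) := by
  have := hinh U
  obtain ⟨y, hy⟩ := Function.exists_forall_apply_of_surjective
    (β := fun m : {m // U.time κ = m + 1} => Y.obj (U.set κ m))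
    (fun m => Y.map (incHom U κ m m.2)) (fun m => htotal U κ m m.2)
    (p := fun m => φ (U.set κ m)) (fun m => h m m.2)
  exact ⟨y, fun m hm => hy ⟨m, hm⟩⟩

/-- if `Y` is a total and inhabited presheaf, then forcing of
`▷κ(∃ y : Y, φ(y))` entails forcing of `∃ y : Y, ▷κ φ(y)`. -/
theorem total_yank_existential (Y : Psh)
    (htotal : ∀ (U : World) (κ : Fin U.n) (m : ℕ) (h : U.time κ = m + 1),
      Function.Surjective (Y.map (incHom U κ m h)))
    (hinh : ∀ U : World, Nonempty (Y.obj U))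
    (φ : ∀ W : World, Y.obj W → Prop)
    (hφ : ∀ {V U : World} (ρ : WHom V U) (y : Y.obj U), φ U y → φ V (Y.map ρ y))
    (U : World) (κ : Fin U.n)
    (h : ∀ m (_ : U.time κ = m + 1), ∃ y : Y.obj (U.set κ m), φ (U.set κ m) y) :
    ∃ y : Y.obj U, ∀ m (hm : U.time κ = m + 1),
      φ (U.set κ m) (Y.map (incHom U κ m hm) y) :=
  total_yank_existential_general Y htotal hinh φ U κ h
end

section
/- The spine of universes is monotone: if i ≤ j then ν_i ⊆ ν_j, where ν_0 = ⊥ and ν_{n+1} is the value-closure of the candidate type system containing, for each i ≤ n, the universe type 𝕌_i paired with the relation of type-similarity in the closure Clo(ν_i). -/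
/-- Candidate type systems over a set `Tm` of closed terms. -/
abbrev CTS (Tm : Type) := Set (Tm × Set (Tm × Tm))

/-- Type similarity in a candidate type system: both types are paired with a
common relation. -/
def Sim {Tm : Type} (τ : CTS Tm) (A B : Tm) : Prop :=
  ∃ R, (A, R) ∈ τ ∧ (B, R) ∈ τ

/-- The universe spine: `ν 0 = ⊥`, and `ν (n+1)` is the value-closure of the
candidate type system containing, for each `i ≤ n`, the universe `Univ i` paired
with type-similarity in `Clo (ν i)`. -/
def spine {Tm : Type} (Clo ValClo : CTS Tm → CTS Tm) (Univ : ℕ → Tm) : ℕ → CTS Tm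
  | 0 => ∅
  | n + 1 => ValClo { p | ∃ i, ∃ _ : i ≤ n, p.1 = Univ i ∧
      p.2 = { q | Sim (Clo (spine Clo ValClo Univ i)) q.1 q.2 } }

/-- the universe spine is monotone: `i ≤ j → ν i ⊆ ν j`. -/
theorem spine_monotone {Tm : Type} (Clo ValClo : CTS Tm → CTS Tm) (Univ : ℕ → Tm)
    (hClo : Monotone Clo) (hVC : Monotone ValClo) :
    ∀ i j : ℕ, i ≤ j → spine Clo ValClo Univ i ⊆ spine Clo ValClo Univ j := by
  intro i j hij
  match i, hij with
  | 0, _ => simp [spine]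
  | m + 1, hij =>
    obtain ⟨k, rfl⟩ := Nat.exists_eq_add_of_le hij
    show spine Clo ValClo Univ (m+1) ⊆ spine Clo ValClo Univ (m+1+k)
    have : m + 1 + k = (m + k) + 1 := by omega
    rw [this]
    simp only [spine]
    apply hVC
    rintro p ⟨a, ha, h1, h2⟩
    exact ⟨a, by omega, h1, h2⟩
end

section
/- Under the monotone universe spine, each universe 𝕌_i is a member of every higher universe: for i < j, the pair (𝕌_i, type-similarity in Clo(ν_i)) belongs to ν_j, and hence 𝕌_i ∼ 𝕌_i holds in τ_j = Clo(ν_j); i.e., the universe formation rule 𝕌_i ∈ 𝕌_j for i < j is validated. -/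
/-- each universe is a member of every higher universe: for
`i < j`, the pair of `Univ i` with type-similarity in `Clo (ν i)` belongs to
`ν j`, and hence `Univ i ∼ Univ i` holds in `τ j = Clo (ν j)`. -/
theorem univ_in_higher_universe {Tm : Type} (Clo ValClo : CTS Tm → CTS Tm)
    (Univ : ℕ → Tm) (IsVal : Tm → Prop)
    (hClo : ∀ σ : CTS Tm, σ ⊆ Clo σ)
    (hVCsub : ∀ σ : CTS Tm, (∀ p ∈ σ, IsVal p.1) → σ ⊆ ValClo σ)
    (hUnivVal : ∀ i, IsVal (Univ i)) :
    ∀ i j : ℕ, i < j →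
      (Univ i, { q | Sim (Clo (spine Clo ValClo Univ i)) q.1 q.2 })
        ∈ spine Clo ValClo Univ j ∧
      Sim (Clo (spine Clo ValClo Univ j)) (Univ i) (Univ i) := by
  intro i j hij
  obtain ⟨n, rfl⟩ := Nat.exists_eq_add_of_lt hij
  have hmem : (Univ i, { q | Sim (Clo (spine Clo ValClo Univ i)) q.1 q.2 })
      ∈ spine Clo ValClo Univ (i + n + 1) := by
    rw [spine]
    apply hVCsub
    · rintro p ⟨k, _, hk, -⟩
      rw [hk]; exact hUnivVal k
    · exact ⟨i, Nat.le_add_right i n, rfl, rfl⟩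
  exact ⟨hmem, _, hClo _ hmem, hClo _ hmem⟩
end
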